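/- arXiv:1605.01484 — 4 statements merged into one kernel-verified Lean document; each statement's English description precedes it below -/
import Mathlib

section
/- Let Q0+(a) = c0·((1/2 - a1)/(a - a1))·exp((1/(4Nα₀k_R))∫_{1/2}^a (Z(τ)/(τ(1-τ)))·((2τ-1)/((a1-τ)(a2-τ)))dτ) with a1 < 0 < 1 < a2, Z(τ) = z₀ + τ₀⁻¹(2τ)^H with z₀, τ₀ > 0, H ≥ 1. Then Q0+(a) = O(a^{θ₀}) as a → 0⁺, where θ₀ = -z₀/(4Nα₀k_R a1 a2) > 0; in particular Q0+(a) → 0 as a → 0⁺. -/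
open Set Filter Asymptotics MeasureTheory

set_option maxHeartbeats 1000000 in
lemma stmt6_aux_bound (N α0 kR z0 τ0 H a1 : ℝ)
    (hN : 0 < N) (hα : 0 < α0) (hk : 0 < kR) (hz : 0 < z0) (hτ0 : 0 < τ0) (hH : 1 ≤ H)
    (ha1 : a1 < 0)
    (τ : ℝ) (hτ1 : 0 < τ) (hτ2 : τ ≤ 1/2) :
    |(1/(4*N*α0*kR)) * (((z0 + τ0⁻¹*(2*τ)^H)/(τ*(1-τ))) * ((2*τ - 1)/((a1-τ)*((1-a1)-τ))))
      - (-z0/(4*N*α0*kR*a1*(1-a1))) * τ⁻¹|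
      ≤ (z0*(3 - a1*(1-a1)) + 2*τ0⁻¹*(-(a1*(1-a1)))) /
        ((4*N*α0*kR) * ((1/2)*(-a1)*((1-a1)-1/2)*(-(a1*(1-a1))))) := by
  have hu0' : 0 ≤ (2*τ)^H := Real.rpow_nonneg (by linarith) H
  have hu' : (2*τ)^H ≤ 2*τ := by
    calc (2*τ)^H ≤ (2*τ)^(1:ℝ) :=
          Real.rpow_le_rpow_of_exponent_ge (by linarith) (by linarith) hH
    _ = 2*τ := Real.rpow_one _
  obtain ⟨u, hu0, hu, hueq⟩ : ∃ u, 0 ≤ u ∧ u ≤ 2*τ ∧ (2*τ)^H = u := ⟨_, hu0', hu', rfl⟩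
  rw [hueq]
  have h4 : (4*N*α0*kR) ≠ 0 := by positivity
  have hτne : τ ≠ 0 := ne_of_gt hτ1
  have h1τ : (1:ℝ) - τ ≠ 0 := by intro h; linarith
  have ha1τ : a1 - τ ≠ 0 := by intro h; linarith
  have ha2τ : (1-a1) - τ ≠ 0 := by intro h; linarith
  have ha1ne : a1 ≠ 0 := ne_of_lt ha1
  have ha2ne : (1:ℝ) - a1 ≠ 0 := by intro h; linarith
  have ha12 : a1 * (1-a1) < 0 := mul_neg_of_neg_of_pos ha1 (by linarith)
  have h5 : (0:ℝ) < -(a1*(1-a1)) := by linarith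
  have hna1 : (0:ℝ) < -a1 := by linarith
  have ha2h : (0:ℝ) < (1-a1) - 1/2 := by linarith
  have hτ0i : 0 < τ0⁻¹ := by positivity
  have hden : 0 < (4*N*α0*kR) * (τ*(1-τ)*(τ-a1)*((1-a1)-τ)*(-(a1*(1-a1)))) := by
    have h1 : (0:ℝ) < 1 - τ := by linarith
    have h2 : (0:ℝ) < τ - a1 := by linarith
    have h3 : (0:ℝ) < (1-a1) - τ := by linarith
    positivity
  have hkey : (1/(4*N*α0*kR)) * (((z0 + τ0⁻¹*u)/(τ*(1-τ))) * ((2*τ - 1)/((a1-τ)*((1-a1)-τ))))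
      - (-z0/(4*N*α0*kR*a1*(1-a1))) * τ⁻¹
      = (z0*τ*(a1*(1-a1) - 1 + 2*τ - τ^2) + τ0⁻¹*u*(2*τ-1)*(a1*(1-a1))) /
        ((4*N*α0*kR) * (τ*(1-τ)*(τ-a1)*((1-a1)-τ)*(-(a1*(1-a1))))) := by
    rw [eq_div_iff (ne_of_gt hden)]
    field_simp
    ring
  rw [hkey, abs_div, abs_of_pos hden]
  have hsq : τ^2 ≤ 1/4 := by nlinarith [mul_nonneg (by linarith : (0:ℝ) ≤ 1/2 - τ) (by linarith : (0:ℝ) ≤ 1/2 + τ)]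
  have hT1 : |z0*τ*(a1*(1-a1) - 1 + 2*τ - τ^2)| ≤ τ * (z0*(3 - a1*(1-a1))) := by
    have habs : |a1*(1-a1) - 1 + 2*τ - τ^2| ≤ 3 - a1*(1-a1) := by
      rw [abs_le]; constructor <;> nlinarith
    calc |z0*τ*(a1*(1-a1) - 1 + 2*τ - τ^2)|
        = z0*τ*|a1*(1-a1) - 1 + 2*τ - τ^2| := by
          rw [abs_mul, abs_of_pos (mul_pos hz hτ1)]
      _ ≤ z0*τ*(3 - a1*(1-a1)) := by
          apply mul_le_mul_of_nonneg_left habs (by positivity)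
      _ = τ * (z0*(3 - a1*(1-a1))) := by ring
  have hT2 : |τ0⁻¹*u*(2*τ-1)*(a1*(1-a1))| ≤ τ * (2*τ0⁻¹*(-(a1*(1-a1)))) := by
    have habs : |τ0⁻¹*u*(2*τ-1)*(a1*(1-a1))| = τ0⁻¹*u*(1-2*τ)*(-(a1*(1-a1))) := by
      rw [abs_mul, abs_mul, abs_mul, abs_of_pos hτ0i, abs_of_nonneg hu0,
        abs_of_nonpos (by linarith : 2*τ-1 ≤ 0), abs_of_neg ha12]
      ring
    rw [habs]
    calc τ0⁻¹*u*(1-2*τ)*(-(a1*(1-a1)))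
        ≤ τ0⁻¹*(2*τ)*1*(-(a1*(1-a1))) := by
          apply mul_le_mul_of_nonneg_right _ (le_of_lt h5)
          apply mul_le_mul (mul_le_mul_of_nonneg_left hu (le_of_lt hτ0i)) (by linarith)
            (by linarith) (by positivity)
      _ = τ * (2*τ0⁻¹*(-(a1*(1-a1)))) := by ring
  have hnum : |z0*τ*(a1*(1-a1) - 1 + 2*τ - τ^2) + τ0⁻¹*u*(2*τ-1)*(a1*(1-a1))|
      ≤ τ * (z0*(3 - a1*(1-a1)) + 2*τ0⁻¹*(-(a1*(1-a1)))) := by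
    calc |z0*τ*(a1*(1-a1) - 1 + 2*τ - τ^2) + τ0⁻¹*u*(2*τ-1)*(a1*(1-a1))|
        ≤ |z0*τ*(a1*(1-a1) - 1 + 2*τ - τ^2)| + |τ0⁻¹*u*(2*τ-1)*(a1*(1-a1))| := abs_add_le _ _
      _ ≤ τ * (z0*(3 - a1*(1-a1))) + τ * (2*τ0⁻¹*(-(a1*(1-a1)))) := add_le_add hT1 hT2
      _ = τ * (z0*(3 - a1*(1-a1)) + 2*τ0⁻¹*(-(a1*(1-a1)))) := by ring
  have hdpos : 0 < (4*N*α0*kR) * ((1/2)*(-a1)*((1-a1)-1/2)*(-(a1*(1-a1)))) := by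
    have : 0 < (1/2)*(-a1)*((1-a1)-1/2)*(-(a1*(1-a1))) :=
      mul_pos (mul_pos (mul_pos (by norm_num) hna1) ha2h) h5
    exact mul_pos (by positivity) this
  have hdenle : τ * ((4*N*α0*kR) * ((1/2)*(-a1)*((1-a1)-1/2)*(-(a1*(1-a1)))))
      ≤ (4*N*α0*kR) * (τ*(1-τ)*(τ-a1)*((1-a1)-τ)*(-(a1*(1-a1)))) := by
    have e1 : (1/2)*(-a1) ≤ (1-τ)*(τ-a1) :=
      mul_le_mul (by linarith) (by linarith) (by linarith) (by linarith)
    have e2 : (1/2)*(-a1)*((1-a1)-1/2) ≤ (1-τ)*(τ-a1)*((1-a1)-τ) :=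
      mul_le_mul e1 (by linarith) (by linarith)
        (mul_nonneg (by linarith) (by linarith))
    calc τ * ((4*N*α0*kR) * ((1/2)*(-a1)*((1-a1)-1/2)*(-(a1*(1-a1)))))
        = (4*N*α0*kR) * (τ*((1/2)*(-a1)*((1-a1)-1/2))*(-(a1*(1-a1)))) := by ring
      _ ≤ (4*N*α0*kR) * (τ*((1-τ)*(τ-a1)*((1-a1)-τ))*(-(a1*(1-a1)))) := by
          apply mul_le_mul_of_nonneg_left _ (by positivity)
          apply mul_le_mul_of_nonneg_right _ (le_of_lt h5)
          exact mul_le_mul_of_nonneg_left e2 (le_of_lt hτ1)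
      _ = (4*N*α0*kR) * (τ*(1-τ)*(τ-a1)*((1-a1)-τ)*(-(a1*(1-a1)))) := by ring
  calc |z0*τ*(a1*(1-a1) - 1 + 2*τ - τ^2) + τ0⁻¹*u*(2*τ-1)*(a1*(1-a1))| /
        ((4*N*α0*kR) * (τ*(1-τ)*(τ-a1)*((1-a1)-τ)*(-(a1*(1-a1)))))
      ≤ (τ * (z0*(3 - a1*(1-a1)) + 2*τ0⁻¹*(-(a1*(1-a1))))) /
        (τ * ((4*N*α0*kR) * ((1/2)*(-a1)*((1-a1)-1/2)*(-(a1*(1-a1)))))) := by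
        have hW : 0 ≤ τ * (z0*(3 - a1*(1-a1)) + 2*τ0⁻¹*(-(a1*(1-a1)))) :=
          mul_nonneg hτ1.le (add_nonneg (mul_nonneg hz.le (by linarith))
            (mul_nonneg (by positivity) h5.le))
        exact div_le_div₀ hW hnum (mul_pos hτ1 hdpos) hdenle
    _ = (z0*(3 - a1*(1-a1)) + 2*τ0⁻¹*(-(a1*(1-a1)))) /
        ((4*N*α0*kR) * ((1/2)*(-a1)*((1-a1)-1/2)*(-(a1*(1-a1))))) := by
        rw [mul_div_mul_left _ _ hτne]

theorem stmt_6 (N α0 kR z0 τ0 H c0 a1 a2 : ℝ)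
    (hN : 0 < N) (hα : 0 < α0) (hk : 0 < kR) (hz : 0 < z0) (hτ : 0 < τ0) (hH : 1 ≤ H)
    (ha1 : a1 < 0) (ha2 : 1 < a2) (hsum : a1 + a2 = 1)
    (Z Qp : ℝ → ℝ)
    (hZ : ∀ τ, Z τ = z0 + τ0⁻¹ * (2*τ) ^ H)
    (hQp : ∀ a, Qp a = c0 * ((1/2 - a1)/(a - a1)) * Real.exp ((1/(4*N*α0*kR)) *
        ∫ τ in (1/2)..a, (Z τ/(τ*(1-τ))) * ((2*τ - 1)/((a1-τ)*(a2-τ))))) :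
    0 < -z0/(4*N*α0*kR*a1*a2) ∧
    Qp =O[nhdsWithin 0 (Ioi 0)] (fun a => a ^ (-z0/(4*N*α0*kR*a1*a2))) ∧
    Tendsto Qp (nhdsWithin 0 (Ioi 0)) (nhds 0) := by
  obtain rfl : a2 = 1 - a1 := by linarith
  have hk4 : (0:ℝ) < 4*N*α0*kR := by positivity
  have ha12 : a1*(1-a1) < 0 := mul_neg_of_neg_of_pos ha1 (by linarith)
  set θ : ℝ := -z0/(4*N*α0*kR*a1*(1-a1)) with hθdef
  have hθpos : 0 < θ := by
    rw [hθdef]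
    apply div_pos_of_neg_of_neg (by linarith)
    have : 4*N*α0*kR*a1*(1-a1) = (4*N*α0*kR)*(a1*(1-a1)) := by ring
    rw [this]
    exact mul_neg_of_pos_of_neg hk4 ha12
  set M : ℝ := (z0*(3 - a1*(1-a1)) + 2*τ0⁻¹*(-(a1*(1-a1)))) /
      ((4*N*α0*kR) * ((1/2)*(-a1)*((1-a1)-1/2)*(-(a1*(1-a1))))) with hMdef
  have hM0 : 0 ≤ M := by
    rw [hMdef]
    apply div_nonneg
    · exact add_nonneg (mul_nonneg hz.le (by linarith)) (mul_nonneg (by positivity) (by linarith))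
    · apply mul_nonneg hk4.le
      apply mul_nonneg (mul_nonneg (mul_nonneg (by norm_num) (by linarith)) (by linarith))
      linarith
  set C : ℝ := |c0| * ((1/2-a1)/(-a1)) * Real.exp (M/2 - θ*Real.log (1/2)) with hCdef
  have hbound : ∀ᶠ a in nhdsWithin (0:ℝ) (Ioi 0), ‖Qp a‖ ≤
      C * ‖a ^ θ‖ := by
    filter_upwards [Ioo_mem_nhdsGT_of_mem (by norm_num : (0:ℝ) ∈ Ico (0:ℝ) (1/2))] with a ha
    obtain ⟨ha0, ha12'⟩ := ha
    -- continuity of pieces on Icc a (1/2)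
    have huIcc : uIcc (1/2:ℝ) a = Icc a (1/2) := uIcc_of_ge ha12'.le
    have hmem : ∀ x ∈ Icc a (1/2:ℝ), 0 < x ∧ x ≤ 1/2 := fun x hx => ⟨lt_of_lt_of_le ha0 hx.1, hx.2⟩
    have hZc : ContinuousOn Z (Icc a (1/2)) := by
      have : Z = fun τ => z0 + τ0⁻¹ * (2*τ) ^ H := funext hZ
      rw [this]
      apply ContinuousOn.add continuousOn_const
      apply ContinuousOn.mul continuousOn_const
      apply ContinuousOn.rpow_const (continuous_const.mul continuous_id).continuousOn
      intro x hx
      exact Or.inl (ne_of_gt (by simpa using (by linarith [(hmem x hx).1] : (0:ℝ) < 2*x)))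
    have hFc : ContinuousOn (fun τ => (1/(4*N*α0*kR)) *
        (Z τ/(τ*(1-τ)) * ((2*τ - 1)/((a1-τ)*(1 - a1-τ))))) (Icc a (1/2)) := by
      apply ContinuousOn.mul continuousOn_const
      apply ContinuousOn.mul
      · apply ContinuousOn.div hZc
        · exact (continuous_id.mul (continuous_const.sub continuous_id)).continuousOn
        · intro x hx
          have := hmem x hx
          have h1 : (0:ℝ) < 1 - x := by linarith [this.2]
          exact ne_of_gt (mul_pos this.1 h1)
      · apply ContinuousOn.div
        · exact (continuous_const.mul continuous_id |>.sub continuous_const).continuousOn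
        · exact ((continuous_const.sub continuous_id).mul
            ((continuous_const.sub continuous_id))).continuousOn
        · intro x hx
          have := hmem x hx
          have h1 : a1 - x < 0 := by linarith [this.1]
          have h2 : (0:ℝ) < 1 - a1 - x := by linarith [this.2]
          exact ne_of_lt (mul_neg_of_neg_of_pos h1 h2)
    have hIc : ContinuousOn (fun τ:ℝ => θ * τ⁻¹) (Icc a (1/2)) := by
      apply ContinuousOn.mul continuousOn_const
      apply ContinuousOn.inv₀ continuousOn_id
      intro x hx
      exact ne_of_gt (hmem x hx).1
    have hFint : IntervalIntegrable (fun τ => (1/(4*N*α0*kR)) *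
        (Z τ/(τ*(1-τ)) * ((2*τ - 1)/((a1-τ)*(1 - a1-τ))))) volume (1/2) a := by
      apply ContinuousOn.intervalIntegrable
      rw [huIcc]; exact hFc
    have hIint : IntervalIntegrable (fun τ:ℝ => θ * τ⁻¹) volume (1/2) a := by
      apply ContinuousOn.intervalIntegrable
      rw [huIcc]; exact hIc
    set B : ℝ := ∫ τ in (1/2:ℝ)..a, ((1/(4*N*α0*kR)) *
        (Z τ/(τ*(1-τ)) * ((2*τ - 1)/((a1-τ)*(1 - a1-τ)))) - θ * τ⁻¹) with hBdef
    have hval : (1/(4*N*α0*kR)) *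
        (∫ τ in (1/2:ℝ)..a, Z τ/(τ*(1-τ)) * ((2*τ - 1)/((a1-τ)*(1 - a1-τ))))
        = B + θ*(Real.log a - Real.log (1/2)) := by
      rw [← intervalIntegral.integral_const_mul]
      have h1 : (∫ τ in (1/2:ℝ)..a, (1/(4*N*α0*kR)) *
          (Z τ/(τ*(1-τ)) * ((2*τ - 1)/((a1-τ)*(1 - a1-τ)))))
          = B + ∫ τ in (1/2:ℝ)..a, θ * τ⁻¹ := by
        rw [hBdef, intervalIntegral.integral_sub hFint hIint]; ring
      rw [h1]
      congr 1
      rw [intervalIntegral.integral_const_mul, integral_inv_of_pos (by norm_num) ha0]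
      rw [Real.log_div (ne_of_gt ha0) (by norm_num)]
    have hBle : B ≤ M/2 := by
      have hb : ∀ x ∈ Set.uIoc (1/2:ℝ) a, ‖(1/(4*N*α0*kR)) *
          (Z x/(x*(1-x)) * ((2*x - 1)/((a1-x)*(1 - a1-x)))) - θ * x⁻¹‖ ≤ M := by
        intro x hx
        rcases Set.mem_uIoc.mp hx with h | h
        · linarith [h.1, h.2]
        · have hx1 : 0 < x := lt_trans ha0 h.1
          have hx2 : x ≤ 1/2 := h.2
          rw [Real.norm_eq_abs, hZ x, hθdef, hMdef]
          exact stmt6_aux_bound N α0 kR z0 τ0 H a1 hN hα hk hz hτ hH ha1 x hx1 hx2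
      have := intervalIntegral.norm_integral_le_of_norm_le_const hb
      rw [← hBdef] at this
      have habs : |a - 1/2| ≤ 1/2 := by rw [abs_le]; constructor <;> linarith
      have h2 : ‖B‖ ≤ M * (1/2) := le_trans this (by
        apply mul_le_mul_of_nonneg_left habs hM0)
      rw [Real.norm_eq_abs, abs_le] at h2
      linarith [h2.2]
    -- assemble
    have hexp : Real.exp ((1/(4*N*α0*kR)) *
        ∫ τ in (1/2:ℝ)..a, Z τ/(τ*(1-τ)) * ((2*τ - 1)/((a1-τ)*(1 - a1-τ))))
        = Real.exp (B - θ*Real.log (1/2)) * a ^ θ := by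
      rw [hval, Real.rpow_def_of_pos ha0, ← Real.exp_add]
      congr 1
      ring
    have hXpos : (0:ℝ) < (1/2 - a1)/(a - a1) := by
      apply div_pos (by linarith) (by linarith)
    have hnorm : ‖Qp a‖ = |c0| * ((1/2 - a1)/(a - a1)) *
        (Real.exp (B - θ*Real.log (1/2)) * a ^ θ) := by
      rw [hQp a, Real.norm_eq_abs, abs_mul, abs_mul, abs_of_pos hXpos,
        abs_of_pos (Real.exp_pos _), hexp]
    rw [hnorm, Real.norm_eq_abs, abs_of_nonneg (Real.rpow_nonneg ha0.le θ)]
    have hX : (1/2 - a1)/(a - a1) ≤ (1/2 - a1)/(-a1) := by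
      rw [div_le_div_iff₀ (by linarith) (by linarith)]
      nlinarith
    have hY : Real.exp (B - θ*Real.log (1/2)) ≤ Real.exp (M/2 - θ*Real.log (1/2)) :=
      Real.exp_le_exp.mpr (by linarith)
    calc |c0| * ((1/2 - a1)/(a - a1)) * (Real.exp (B - θ*Real.log (1/2)) * a ^ θ)
        = (|c0| * ((1/2 - a1)/(a - a1)) * Real.exp (B - θ*Real.log (1/2))) * a ^ θ := by ring
      _ ≤ (|c0| * ((1/2 - a1)/(-a1)) * Real.exp (M/2 - θ*Real.log (1/2))) * a ^ θ := by
          apply mul_le_mul_of_nonneg_right _ (Real.rpow_nonneg ha0.le θ)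
          apply mul_le_mul (mul_le_mul_of_nonneg_left hX (abs_nonneg c0)) hY
            (Real.exp_pos _).le
            (mul_nonneg (abs_nonneg c0) (div_nonneg (by linarith) (by linarith)))
      _ = C * a ^ θ := by rw [hCdef]
  have hBO : Qp =O[nhdsWithin 0 (Ioi 0)] (fun a => a ^ θ) := by
    rw [isBigO_iff]; exact ⟨C, hbound⟩
  refine ⟨hθpos, hBO, ?_⟩
  have hrpow : Tendsto (fun x:ℝ => x ^ θ) (nhdsWithin 0 (Ioi 0)) (nhds 0) := by
    have hc : ContinuousAt (fun x:ℝ => x ^ θ) 0 :=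
      Real.continuousAt_rpow_const 0 θ (Or.inr hθpos.le)
    have h := hc.tendsto
    simp only [Real.zero_rpow hθpos.ne'] at h
    exact h.mono_left nhdsWithin_le_nhds
  exact hBO.trans_tendsto hrpow
end

section
/- With the same Q0+ as above and a1 < 0 < 1 < a2, Q0+(a) = O((1-a)^{θ₁}) as a → 1⁻, where θ₁ = 2^H/(4Nα₀k_R(1-a1)(a2-1)) > 0. -/
open Set Filter Asymptotics MeasureTheory

set_option maxHeartbeats 1000000 in
theorem stmt_7 (N α0 kR z0 τ0 H c0 a1 a2 : ℝ)
    (hN : 0 < N) (hα : 0 < α0) (hk : 0 < kR) (hz : 0 < z0) (hτ : 0 < τ0) (hH : 1 ≤ H)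
    (ha1 : a1 < 0) (ha2 : 1 < a2) (hsum : a1 + a2 = 1)
    (Z Qp : ℝ → ℝ)
    (hZ : ∀ τ, Z τ = z0 + τ0⁻¹ * (2*τ) ^ H)
    (hQp : ∀ a, Qp a = c0 * ((1/2 - a1)/(a - a1)) * Real.exp ((1/(4*N*α0*kR)) *
        ∫ τ in (1/2)..a, (Z τ/(τ*(1-τ))) * ((2*τ - 1)/((a1-τ)*(a2-τ))))) :
    0 < (z0 + τ0⁻¹ * 2 ^ H)/(4*N*α0*kR*(1-a1)*(a2-1)) ∧
    Qp =O[nhdsWithin 1 (Iio 1)]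
      (fun a => (1 - a) ^ ((z0 + τ0⁻¹ * 2 ^ H)/(4*N*α0*kR*(1-a1)*(a2-1)))) := by
  have hC : (0:ℝ) < 4*N*α0*kR := by positivity
  have h1a1 : (0:ℝ) < 1 - a1 := by linarith
  have ha21 : (0:ℝ) < a2 - 1 := by linarith
  have h2H : (0:ℝ) < (2:ℝ) ^ H := Real.rpow_pos_of_pos (by norm_num) H
  have hnum : 0 < z0 + τ0⁻¹ * 2 ^ H := by positivity
  have hθpos : 0 < (z0 + τ0⁻¹ * 2 ^ H)/(4*N*α0*kR*(1-a1)*(a2-1)) :=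
    div_pos hnum (by positivity)
  refine ⟨hθpos, ?_⟩
  obtain ⟨θ, hθdef⟩ : ∃ θ : ℝ, θ = (z0 + τ0⁻¹ * 2 ^ H)/(4*N*α0*kR*(1-a1)*(a2-1)) := ⟨_, rfl⟩
  rw [← hθdef] at hθpos ⊢
  obtain ⟨g, hgdef⟩ : ∃ g : ℝ → ℝ,
      g = fun τ => (z0 + τ0⁻¹ * (2*τ) ^ H) * (2*τ-1) / (τ*(τ-a1)*(a2-τ)) := ⟨_, rfl⟩
  -- g is C¹ at 1
  have hgC : ContDiffAt ℝ 1 g 1 := by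
    rw [hgdef]
    apply ContDiffAt.div
    · exact (contDiffAt_const.add (contDiffAt_const.mul
        (((contDiffAt_const.mul contDiffAt_id).rpow_const_of_ne
          (by norm_num : (2:ℝ)*1 ≠ 0))))).mul
        ((contDiffAt_const.mul contDiffAt_id).sub contDiffAt_const)
    · exact ((contDiffAt_id.mul (contDiffAt_id.sub contDiffAt_const)).mul
        (contDiffAt_const.sub contDiffAt_id))
    · show (1:ℝ) * (1 - a1) * (a2 - 1) ≠ 0
      positivity
  obtain ⟨K, t, ht, hlip⟩ := hgC.exists_lipschitzOnWith
  obtain ⟨δ, hδ, hball⟩ := Metric.mem_nhds_iff.1 ht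
  have hlipb : LipschitzOnWith K g (Metric.ball 1 δ) := hlip.mono hball
  obtain ⟨b, hbdef⟩ : ∃ b : ℝ, b = max (1/2) (1 - δ/2) := ⟨_, rfl⟩
  have hb1 : b < 1 := by
    rw [hbdef]
    apply max_lt <;> [norm_num; linarith]
  have hbhalf : (1/2:ℝ) ≤ b := hbdef ▸ le_max_left _ _
  have h1b : (0:ℝ) < 1 - b := by linarith
  obtain ⟨L, hLdef⟩ : ∃ L : ℝ, L = max (K:ℝ) (g 1/(1-b)) := ⟨_, rfl⟩
  -- nonnegativity of g on [1/2,1]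
  have hgnn : ∀ τ ∈ Icc (1/2:ℝ) 1, 0 ≤ g τ := by
    intro τ hτ
    rw [hgdef]
    obtain ⟨hτ1, hτ2⟩ := hτ
    apply div_nonneg
    · apply mul_nonneg
      · have : (0:ℝ) ≤ (2*τ) ^ H := Real.rpow_nonneg (by linarith) H
        positivity
      · linarith
    · have hτpos : (0:ℝ) < τ := by linarith
      have : (0:ℝ) < τ - a1 := by linarith
      have : (0:ℝ) < a2 - τ := by linarith
      positivity
  have hg1nn : 0 ≤ g 1 := hgnn 1 ⟨by norm_num, le_refl 1⟩
  have hLnn : (0:ℝ) ≤ L := hLdef ▸ le_trans (by positivity) (le_max_left _ _)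
  -- the key linear bound
  have hkey : ∀ τ ∈ Ico (1/2:ℝ) 1, g 1 - g τ ≤ L * (1-τ) := by
    intro τ ⟨hτ1, hτ2⟩
    rcases le_or_gt b τ with hbτ | hbτ
    · have hτball : τ ∈ Metric.ball (1:ℝ) δ := by
        rw [Metric.mem_ball, Real.dist_eq]
        rw [abs_of_nonpos (by linarith)]
        have : 1 - δ/2 ≤ b := hbdef ▸ le_max_right _ _
        linarith
      have h1ball : (1:ℝ) ∈ Metric.ball (1:ℝ) δ := Metric.mem_ball_self hδ
      have := hlipb.dist_le_mul 1 h1ball τ hτball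
      rw [Real.dist_eq, Real.dist_eq] at this
      have h1 : |g 1 - g τ| ≤ (K:ℝ) * (1-τ) := by
        rwa [abs_of_nonneg (by linarith : (0:ℝ) ≤ 1 - τ)] at this
      have h2 : g 1 - g τ ≤ |g 1 - g τ| := le_abs_self _
      have h3 : (K:ℝ) * (1-τ) ≤ L * (1-τ) :=
        mul_le_mul_of_nonneg_right (hLdef ▸ le_max_left _ _) (by linarith)
      linarith
    · have hgτ : 0 ≤ g τ := hgnn τ ⟨hτ1, le_of_lt hτ2⟩
      have h1 : g 1 ≤ (g 1/(1-b)) * (1-b) := by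
        rw [div_mul_cancel₀ _ (ne_of_gt h1b)]
      have h2 : (g 1/(1-b)) * (1-b) ≤ L * (1-b) :=
        mul_le_mul_of_nonneg_right (hLdef ▸ le_max_right _ _) (le_of_lt h1b)
      have h3 : L * (1-b) ≤ L * (1-τ) :=
        mul_le_mul_of_nonneg_left (by linarith) hLnn
      linarith
  -- relate θ to g 1
  have hθeq : θ = g 1 / (4*N*α0*kR) := by
    rw [hθdef, hgdef]
    field_simp
    ring
  rw [isBigO_iff]
  refine ⟨|c0| * Real.exp ((L/2 + g 1 * Real.log 2)/(4*N*α0*kR)), ?_⟩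
  filter_upwards [Ioo_mem_nhdsLT_of_mem
    (show (1:ℝ) ∈ Ioc (1/2) 1 by constructor <;> norm_num)] with a ha
  obtain ⟨haL, haR⟩ := ha
  have h1a : (0:ℝ) < 1 - a := by linarith
  have hZfun : Z = fun τ => z0 + τ0⁻¹ * (2*τ) ^ H := funext hZ
  -- continuity facts on Icc (1/2) a
  have hIcc : uIcc (1/2:ℝ) a = Icc (1/2) a := uIcc_of_le (le_of_lt haL)
  have hZc : Continuous Z := by
    rw [hZfun]
    exact continuous_const.add (continuous_const.mul
      ((continuous_const.mul continuous_id).rpow_const (fun x => Or.inr (by linarith))))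
  have hmem : ∀ τ ∈ Icc (1/2:ℝ) a, (0:ℝ) < τ ∧ (0:ℝ) < 1 - τ ∧
      (0:ℝ) < τ - a1 ∧ (0:ℝ) < a2 - τ := by
    intro τ ⟨h1, h2⟩
    exact ⟨by linarith, by linarith, by linarith, by linarith⟩
  obtain ⟨f, hfdef⟩ : ∃ f : ℝ → ℝ,
      f = fun τ => (Z τ/(τ*(1-τ))) * ((2*τ - 1)/((a1-τ)*(a2-τ))) := ⟨_, rfl⟩
  have hfcont : ContinuousOn f (Icc (1/2:ℝ) a) := by
    rw [hfdef]
    apply ContinuousOn.mul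
    · apply ContinuousOn.div hZc.continuousOn
      · exact (continuousOn_id.mul (continuousOn_const.sub continuousOn_id))
      · intro τ hτ
        obtain ⟨p1, p2, p3, p4⟩ := hmem τ hτ
        positivity
    · apply ContinuousOn.div
      · exact (continuousOn_const.mul continuousOn_id).sub continuousOn_const
      · exact ((continuousOn_const.sub continuousOn_id).mul
          (continuousOn_const.sub continuousOn_id))
      · intro τ hτ
        obtain ⟨p1, p2, p3, p4⟩ := hmem τ hτ
        have e1 : a1 - τ < 0 := by linarith
        have e2 : 0 < a2 - τ := p4
        exact ne_of_lt (mul_neg_of_neg_of_pos e1 e2)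
  have hfint : IntervalIntegrable f volume (1/2) a := by
    apply ContinuousOn.intervalIntegrable
    rwa [hIcc]
  have hbcont : ContinuousOn (fun τ : ℝ => L - g 1 * (1-τ)⁻¹) (Icc (1/2:ℝ) a) := by
    apply ContinuousOn.sub continuousOn_const
    apply ContinuousOn.mul continuousOn_const
    apply ContinuousOn.inv₀ (continuousOn_const.sub continuousOn_id)
    intro τ hτ
    exact ne_of_gt (hmem τ hτ).2.1
  have hbint : IntervalIntegrable (fun τ : ℝ => L - g 1 * (1-τ)⁻¹) volume (1/2) a := by
    apply ContinuousOn.intervalIntegrable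
    rwa [hIcc]
  -- pointwise bound
  have hpt : ∀ τ ∈ Icc (1/2:ℝ) a, f τ ≤ L - g 1 * (1-τ)⁻¹ := by
    intro τ hτ
    obtain ⟨p1, p2, p3, p4⟩ := hmem τ hτ
    have hfeq : f τ = -(g τ) / (1-τ) := by
      simp only [hfdef, hgdef, hZ]
      have n1 : τ ≠ 0 := ne_of_gt p1
      have n2 : (1:ℝ) - τ ≠ 0 := ne_of_gt p2
      have n3 : τ - a1 ≠ 0 := ne_of_gt p3
      have n4 : a2 - τ ≠ 0 := ne_of_gt p4
      have n5 : a1 - τ ≠ 0 := by intro h; apply n3; linarith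
      field_simp
      ring
    rw [hfeq, div_le_iff₀ p2]
    have hk := hkey τ ⟨hτ.1, by linarith [hτ.2]⟩
    have hinv : (1-τ)⁻¹ * (1-τ) = 1 := inv_mul_cancel₀ (ne_of_gt p2)
    nlinarith [hk, hinv]
  have hmono : (∫ τ in (1/2:ℝ)..a, f τ) ≤ ∫ τ in (1/2:ℝ)..a, (L - g 1 * (1-τ)⁻¹) :=
    intervalIntegral.integral_mono_on (le_of_lt haL) hfint hbint hpt
  -- compute the bounding integral
  have hinvint : (∫ τ in (1/2:ℝ)..a, (1-τ)⁻¹) = Real.log ((1/2)/(1-a)) := by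
    have h := intervalIntegral.integral_comp_sub_left (fun u : ℝ => u⁻¹) 1 (a := (1/2:ℝ)) (b := a)
    rw [h, integral_inv_of_pos h1a (by norm_num : (0:ℝ) < 1 - 1/2)]
    norm_num
  have hbint2 : IntervalIntegrable (fun τ : ℝ => g 1 * (1-τ)⁻¹) volume (1/2) a := by
    apply ContinuousOn.intervalIntegrable
    rw [hIcc]
    exact continuousOn_const.mul ((continuousOn_const.sub continuousOn_id).inv₀
      (fun τ hτ => ne_of_gt (hmem τ hτ).2.1))
  have hbval : (∫ τ in (1/2:ℝ)..a, (L - g 1 * (1-τ)⁻¹))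
      = L * (a - 1/2) - g 1 * Real.log ((1/2)/(1-a)) := by
    rw [intervalIntegral.integral_sub intervalIntegrable_const hbint2,
      intervalIntegral.integral_const, intervalIntegral.integral_const_mul, hinvint]
    simp [smul_eq_mul]
    ring
  have hlog : Real.log ((1/2)/(1-a)) = -Real.log 2 - Real.log (1-a) := by
    rw [Real.log_div (by norm_num) (ne_of_gt h1a), one_div, Real.log_inv]
  -- final estimate of the exponent
  have hexp : (1/(4*N*α0*kR)) * (∫ τ in (1/2:ℝ)..a, f τ)
      ≤ (L/2 + g 1 * Real.log 2)/(4*N*α0*kR) + θ * Real.log (1-a) := by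
    have h1 : (∫ τ in (1/2:ℝ)..a, f τ)
        ≤ L * (a - 1/2) + g 1 * Real.log 2 + g 1 * Real.log (1-a) := by
      rw [hbval, hlog] at hmono
      linarith [hmono]
    have h2 : (∫ τ in (1/2:ℝ)..a, f τ) ≤ L/2 + g 1 * Real.log 2 + g 1 * Real.log (1-a) := by
      have h3 := mul_le_mul_of_nonneg_left (show a - 1/2 ≤ (1/2:ℝ) by linarith) hLnn
      have h4 : L * (a - 1/2) ≤ L/2 := by linarith
      linarith
    have h5 : (1/(4*N*α0*kR)) * (∫ τ in (1/2:ℝ)..a, f τ)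
        ≤ (1/(4*N*α0*kR)) * (L/2 + g 1 * Real.log 2 + g 1 * Real.log (1-a)) :=
      mul_le_mul_of_nonneg_left h2 (by positivity)
    have h6 : (1/(4*N*α0*kR)) * (L/2 + g 1 * Real.log 2 + g 1 * Real.log (1-a))
        = (L/2 + g 1 * Real.log 2)/(4*N*α0*kR) + θ * Real.log (1-a) := by
      rw [hθeq]
      field_simp
    linarith [h5, h6.symm.le, h6.le]
  -- put everything together
  have hQa : Qp a = c0 * ((1/2 - a1)/(a - a1)) * Real.exp ((1/(4*N*α0*kR)) *
      ∫ τ in (1/2:ℝ)..a, f τ) := by rw [hQp a, hfdef]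
  have hpre : 0 < (1/2 - a1)/(a - a1) := by
    apply div_pos <;> linarith
  have hpre1 : (1/2 - a1)/(a - a1) ≤ 1 := by
    rw [div_le_one (by linarith)]
    linarith
  have hrpow : (1 - a) ^ θ = Real.exp (θ * Real.log (1-a)) := by
    rw [Real.rpow_def_of_pos h1a, mul_comm]
  have hrpos : (0:ℝ) < (1 - a) ^ θ := Real.rpow_pos_of_pos h1a θ
  rw [Real.norm_eq_abs, Real.norm_eq_abs, hQa, abs_of_pos hrpos]
  rw [abs_mul, abs_mul, abs_of_pos hpre, Real.abs_exp]
  have hexp2 : Real.exp ((1/(4*N*α0*kR)) * ∫ τ in (1/2:ℝ)..a, f τ)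
      ≤ Real.exp ((L/2 + g 1 * Real.log 2)/(4*N*α0*kR)) * (1-a) ^ θ := by
    rw [hrpow, ← Real.exp_add]
    exact Real.exp_le_exp.2 hexp
  calc |c0| * ((1/2 - a1)/(a - a1)) * Real.exp ((1/(4*N*α0*kR)) * ∫ τ in (1/2:ℝ)..a, f τ)
      ≤ |c0| * 1 * (Real.exp ((L/2 + g 1 * Real.log 2)/(4*N*α0*kR)) * (1-a) ^ θ) := by
        exact mul_le_mul (mul_le_mul_of_nonneg_left hpre1 (abs_nonneg c0)) hexp2
          (le_of_lt (Real.exp_pos _)) (by positivity)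
    _ = |c0| * Real.exp ((L/2 + g 1 * Real.log 2)/(4*N*α0*kR)) * (1-a) ^ θ := by ring
end

section
/- Let Q0± be the explicit equilibrium distributions with g > 1 (so a1 < 0 < 1 < a2) and suppose the decay exponents θ₀, θ₁ at a = 0, 1 are strictly positive. Then the normalization integrals ∫₀¹ Q0±(a)/(a(1-a)) da are finite. -/
open Set Filter MeasureTheory

set_option maxHeartbeats 1600000

theorem stmt_14 (N α0 kR z0 τ0 H c0 a1 a2 : ℝ)
    (hN : 0 < N) (hα : 0 < α0) (hk : 0 < kR) (hz : 0 < z0) (hτ : 0 < τ0) (hH : 1 ≤ H)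
    (ha1 : a1 < 0) (ha2 : 1 < a2) (hsum : a1 + a2 = 1)
    (Z Qp Qm : ℝ → ℝ)
    (hZ : ∀ τ, Z τ = z0 + τ0⁻¹ * (2*τ) ^ H)
    (hQp : ∀ a, Qp a = c0 * ((1/2 - a1)/(a - a1)) * Real.exp ((1/(4*N*α0*kR)) *
        ∫ τ in (1/2)..a, (Z τ/(τ*(1-τ))) * ((2*τ - 1)/((a1-τ)*(a2-τ)))))
    (hQm : ∀ a, Qm a = c0 * ((1/2 - a1)/(a2 - a)) * Real.exp ((1/(4*N*α0*kR)) *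
        ∫ τ in (1/2)..a, (Z τ/(τ*(1-τ))) * ((2*τ - 1)/((a1-τ)*(a2-τ)))))
    (hθ0 : 0 < -z0/(4*N*α0*kR*a1*a2))
    (hθ1 : 0 < (z0 + τ0⁻¹ * 2 ^ H)/(4*N*α0*kR*(1-a1)*(a2-1))) :
    IntegrableOn (fun a => Qp a / (a * (1 - a))) (Ioo (0:ℝ) 1) ∧
    IntegrableOn (fun a => Qm a / (a * (1 - a))) (Ioo (0:ℝ) 1) := by
  have key : ∀ w : ℝ → ℝ, ContinuousOn w (Ioo 0 1) → ∀ M : ℝ,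
      (∀ a ∈ Ioo (0:ℝ) 1, |w a| ≤ M) →
      IntegrableOn (fun a => w a * Real.exp ((1/(4*N*α0*kR)) *
        ∫ τ in (1/2)..a, (Z τ/(τ*(1-τ))) * ((2*τ - 1)/((a1-τ)*(a2-τ)))) / (a * (1 - a)))
        (Ioo (0:ℝ) 1) := by
    intro w hw M hM
    have hM0 : 0 ≤ M := le_trans (abs_nonneg _) (hM (1/2) (by norm_num))
    set C : ℝ := 1/(4*N*α0*kR) with hC_def
    have hC0 : 0 < C := by rw [hC_def]; positivity
    set g : ℝ → ℝ := fun τ => (Z τ/(τ*(1-τ))) * ((2*τ - 1)/((a1-τ)*(a2-τ))) with hg_def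
    have ha1' : (0:ℝ) < 1/2 - a1 := by linarith
    have ha2' : (0:ℝ) < a2 := by linarith
    -- continuity of Z
    have hZcont : ContinuousOn Z (Ioo 0 1) := by
      have : Z = fun τ => z0 + τ0⁻¹ * (2*τ) ^ H := funext hZ
      rw [this]
      exact continuousOn_const.add (continuousOn_const.mul
        (((continuous_const.mul continuous_id).continuousOn).rpow_const
          (fun x _ => Or.inr (by linarith))))
    have hZlb : ∀ τ : ℝ, 0 < τ → z0 ≤ Z τ := by
      intro τ hτ0
      rw [hZ]
      have h1 : (0:ℝ) ≤ (2*τ) ^ H := Real.rpow_nonneg (by linarith) H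
      have h2 : (0:ℝ) ≤ τ0⁻¹ := inv_nonneg.mpr hτ.le
      nlinarith
    have hgcont : ContinuousOn g (Ioo 0 1) := by
      rw [hg_def]
      apply ContinuousOn.mul
      · exact hZcont.div (continuousOn_id.mul (continuousOn_const.sub continuousOn_id))
          (fun x hx => by
            obtain ⟨h0, h1⟩ := hx
            have : (0:ℝ) < x * (1 - x) := mul_pos h0 (by linarith)
            exact ne_of_gt this)
      · exact (((continuous_const.mul continuous_id).sub continuous_const).continuousOn).div
          ((continuousOn_const.sub continuousOn_id).mul (continuousOn_const.sub continuousOn_id))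
          (fun x hx => by
            obtain ⟨h0, h1⟩ := hx
            have h2 : a1 - x < 0 := by linarith
            have h3 : 0 < a2 - x := by linarith
            exact ne_of_lt (mul_neg_of_neg_of_pos h2 h3))
    have hgint : ∀ x y : ℝ, x ∈ Ioo (0:ℝ) 1 → y ∈ Ioo (0:ℝ) 1 →
        IntervalIntegrable g volume x y := fun x y hx hy =>
      (hgcont.mono (Set.ordConnected_Ioo.uIcc_subset hx hy)).intervalIntegrable
    have h12 : (1/2:ℝ) ∈ Ioo (0:ℝ) 1 := by norm_num
    have hIcont : ContinuousOn (fun x => ∫ τ in (1/2:ℝ)..x, g τ) (Ioo 0 1) := by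
      intro x hx
      have hd := intervalIntegral.integral_hasDerivAt_right (hgint _ _ h12 hx)
        (hgcont.stronglyMeasurableAtFilter isOpen_Ioo x hx)
        (hgcont.continuousAt (isOpen_Ioo.mem_nhds hx))
      exact hd.continuousAt.continuousWithinAt
    -- algebraic form of g
    have hgI : ∀ τ : ℝ, 0 < τ → τ < 1 →
        g τ = Z τ * (1-2*τ) / (τ*(1-τ)*((τ-a1)*(a2-τ))) := by
      intro τ h0 h1
      rw [hg_def]
      have e1 : τ ≠ 0 := ne_of_gt h0
      have e2 : (1:ℝ) - τ ≠ 0 := sub_ne_zero.mpr (by linarith)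
      have e3 : a1 - τ ≠ 0 := sub_ne_zero.mpr (by linarith)
      have e4 : a2 - τ ≠ 0 := sub_ne_zero.mpr (by linarith)
      have e3' : τ - a1 ≠ 0 := sub_ne_zero.mpr (by linarith)
      field_simp
      ring
    -- continuity of the whole integrand
    have hFcont : ContinuousOn (fun a => w a * Real.exp (C *
        ∫ τ in (1/2:ℝ)..a, g τ) / (a * (1 - a))) (Ioo 0 1) := by
      apply ContinuousOn.div
      · exact hw.mul (Real.continuous_exp.comp_continuousOn
          (continuousOn_const.mul hIcont))
      · exact continuousOn_id.mul (continuousOn_const.sub continuousOn_id)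
      · intro x hx
        obtain ⟨h0, h1⟩ := hx
        exact ne_of_gt (mul_pos h0 (by linarith))
    have hP0 : 0 < z0/((1/2-a1)*a2) := div_pos hz (mul_pos ha1' ha2')
    have hP1 : 0 < z0/((1-a1)*a2) := div_pos hz (mul_pos (by linarith) ha2')
    -- upper bound for the exponent near 0
    have hub0 : ∀ a ∈ Ioc (0:ℝ) (1/2), C * (∫ τ in (1/2:ℝ)..a, g τ) ≤
        C*(z0/((1/2-a1)*a2)) * Real.log a + C*(z0/((1/2-a1)*a2)) * (1 - Real.log (1/2)) := by
      intro a ha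
      obtain ⟨ha0, hah⟩ := ha
      have hptw : ∀ τ ∈ Icc a (1/2:ℝ), z0/((1/2-a1)*a2) * ((1-2*τ)/τ) ≤ g τ := by
        intro τ ht
        obtain ⟨ht1, ht2⟩ := ht
        have hτ0 : 0 < τ := lt_of_lt_of_le ha0 ht1
        have hτ1 : τ < 1 := by linarith
        rw [hgI τ hτ0 hτ1, div_mul_div_comm,
          div_le_div_iff₀ (mul_pos (mul_pos ha1' ha2') hτ0)
            (mul_pos (mul_pos hτ0 (by linarith)) (mul_pos (by linarith) (by linarith)))]
        have hZl := hZlb τ hτ0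
        have hin : (τ-a1)*(a2-τ) ≤ (1/2-a1)*a2 :=
          mul_le_mul (by linarith) (by linarith) (by linarith) (by linarith)
        have hAB : (1-τ)*((τ-a1)*(a2-τ)) ≤ (1/2-a1)*a2 := by
          have := mul_le_mul (show (1:ℝ)-τ ≤ 1 by linarith) hin
            (mul_nonneg (by linarith) (by linarith)) (by norm_num)
          linarith [this]
        have h2 : z0*((1-τ)*((τ-a1)*(a2-τ))) ≤ Z τ * ((1/2-a1)*a2) :=
          mul_le_mul hZl hAB
            (mul_nonneg (by linarith) (mul_nonneg (by linarith) (by linarith)))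
            (le_trans hz.le hZl)
        nlinarith [mul_le_mul_of_nonneg_left h2
          (mul_nonneg (show (0:ℝ) ≤ 1-2*τ by linarith) hτ0.le)]
      have hl_int : IntervalIntegrable (fun τ => z0/((1/2-a1)*a2) * ((1-2*τ)/τ))
          volume a (1/2) := by
        apply ContinuousOn.intervalIntegrable
        apply ContinuousOn.mul continuousOn_const
        apply ContinuousOn.div
          ((continuous_const.sub (continuous_const.mul continuous_id)).continuousOn)
          continuousOn_id
        intro x hx
        rw [uIcc_of_le hah] at hx
        exact ne_of_gt (lt_of_lt_of_le ha0 hx.1)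
      have hg_int : IntervalIntegrable g volume a (1/2) :=
        hgint _ _ ⟨ha0, by linarith⟩ h12
      have hmono := intervalIntegral.integral_mono_on hah hl_int hg_int hptw
      have h0not : (0:ℝ) ∉ uIcc a (1/2:ℝ) := by
        rw [uIcc_of_le hah]
        intro h
        exact absurd h.1 (not_le.mpr ha0)
      have hinv_int : IntervalIntegrable (fun x : ℝ => x⁻¹) volume a (1/2) :=
        intervalIntegral.intervalIntegrable_inv (fun x hx => by
          rw [uIcc_of_le hah] at hx; exact ne_of_gt (lt_of_lt_of_le ha0 hx.1))
          continuousOn_id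
      have hval : (∫ τ in a..(1/2:ℝ), z0/((1/2-a1)*a2) * ((1-2*τ)/τ)) =
          z0/((1/2-a1)*a2) * ((Real.log (1/2) - Real.log a) - 2*(1/2 - a)) := by
        have hEq : ∀ τ ∈ uIcc a (1/2:ℝ),
            z0/((1/2-a1)*a2) * ((1-2*τ)/τ) = z0/((1/2-a1)*a2) * (τ⁻¹ - 2) := by
          intro τ hτ
          rw [uIcc_of_le hah] at hτ
          have hτ0 : τ ≠ 0 := ne_of_gt (lt_of_lt_of_le ha0 hτ.1)
          congr 1
          field_simp
        rw [intervalIntegral.integral_congr hEq, intervalIntegral.integral_const_mul]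
        congr 1
        rw [intervalIntegral.integral_sub hinv_int intervalIntegrable_const,
          integral_inv h0not, intervalIntegral.integral_const,
          Real.log_div (by norm_num) (ne_of_gt ha0)]
        simp [smul_eq_mul]
        ring
      rw [hval] at hmono
      rw [intervalIntegral.integral_symm a (1/2:ℝ)]
      nlinarith [mul_le_mul_of_nonneg_left hmono hC0.le,
        mul_pos (mul_pos hC0 hP0) ha0]
    -- upper bound for the exponent near 1
    have hub1 : ∀ a ∈ Ico (1/2:ℝ) 1, C * (∫ τ in (1/2:ℝ)..a, g τ) ≤
        C*(z0/((1-a1)*a2)) * Real.log (1-a) + C*(z0/((1-a1)*a2)) * (1 - Real.log (1/2)) := by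
      intro a ha
      obtain ⟨hha, hhb⟩ := ha
      have hptw : ∀ τ ∈ Icc (1/2:ℝ) a, g τ ≤ z0/((1-a1)*a2) * ((1-2*τ)/(1-τ)) := by
        intro τ ht
        obtain ⟨ht1, ht2⟩ := ht
        have hτ0 : 0 < τ := by linarith
        have hτ1 : τ < 1 := by linarith
        rw [hgI τ hτ0 hτ1, div_mul_div_comm,
          div_le_div_iff₀
            (mul_pos (mul_pos hτ0 (by linarith)) (mul_pos (by linarith) (by linarith)))
            (mul_pos (mul_pos (by linarith : (0:ℝ) < 1-a1) ha2') (by linarith : (0:ℝ) < 1-τ))]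
        have hZl := hZlb τ hτ0
        have hin : τ*((τ-a1)*(a2-τ)) ≤ (1-a1)*a2 := by
          have h1 : (τ-a1)*(a2-τ) ≤ (1-a1)*a2 :=
            mul_le_mul (by linarith) (by linarith) (by linarith) (by linarith)
          have := mul_le_mul (show τ ≤ 1 by linarith) h1
            (mul_nonneg (by linarith) (by linarith)) (by norm_num)
          linarith [this]
        have h2 : z0*(τ*((τ-a1)*(a2-τ))) ≤ Z τ * ((1-a1)*a2) :=
          mul_le_mul hZl hin
            (mul_nonneg hτ0.le (mul_nonneg (by linarith) (by linarith)))
            (le_trans hz.le hZl)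
        nlinarith [mul_le_mul_of_nonneg_left h2
          (mul_nonneg (show (0:ℝ) ≤ 2*τ-1 by linarith) (show (0:ℝ) ≤ 1-τ by linarith))]
      have hu_int : IntervalIntegrable (fun τ => z0/((1-a1)*a2) * ((1-2*τ)/(1-τ)))
          volume (1/2) a := by
        apply ContinuousOn.intervalIntegrable
        apply ContinuousOn.mul continuousOn_const
        apply ContinuousOn.div
          ((continuous_const.sub (continuous_const.mul continuous_id)).continuousOn)
          ((continuous_const.sub continuous_id).continuousOn)
        intro x hx
        rw [uIcc_of_le hha] at hx
        exact ne_of_gt (by linarith [hx.2] : (0:ℝ) < 1 - x)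
      have hg_int : IntervalIntegrable g volume (1/2) a :=
        hgint _ _ h12 ⟨by linarith, hhb⟩
      have hmono := intervalIntegral.integral_mono_on hha hg_int hu_int hptw
      have hinv_int : IntervalIntegrable (fun x : ℝ => (1-x)⁻¹) volume (1/2) a := by
        apply ContinuousOn.intervalIntegrable
        apply ContinuousOn.inv₀ ((continuous_const.sub continuous_id).continuousOn)
        intro x hx
        rw [uIcc_of_le hha] at hx
        exact ne_of_gt (by linarith [hx.2] : (0:ℝ) < 1 - x)
      have hcomp : (∫ x in (1/2:ℝ)..a, (1-x)⁻¹) = ∫ x in (1-a)..(1-(1/2:ℝ)), x⁻¹ :=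
        intervalIntegral.integral_comp_sub_left (fun u : ℝ => u⁻¹) 1
      have h0not : (0:ℝ) ∉ uIcc (1-a) (1-(1/2:ℝ)) := by
        rw [uIcc_of_le (by linarith)]
        intro h
        have := h.1
        linarith
      have hval : (∫ τ in (1/2:ℝ)..a, z0/((1-a1)*a2) * ((1-2*τ)/(1-τ))) =
          z0/((1-a1)*a2) * ((Real.log (1-a) - Real.log (1/2)) + 2*(a - 1/2)) := by
        have hEq : ∀ τ ∈ uIcc (1/2:ℝ) a,
            z0/((1-a1)*a2) * ((1-2*τ)/(1-τ)) = z0/((1-a1)*a2) * (2 - (1-τ)⁻¹) := by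
          intro τ hτ
          rw [uIcc_of_le hha] at hτ
          have hτ1 : (1:ℝ) - τ ≠ 0 := ne_of_gt (by linarith [hτ.2] : (0:ℝ) < 1 - τ)
          congr 1
          field_simp
          ring
        rw [intervalIntegral.integral_congr hEq, intervalIntegral.integral_const_mul]
        congr 1
        rw [intervalIntegral.integral_sub intervalIntegrable_const hinv_int,
          intervalIntegral.integral_const, hcomp, integral_inv h0not,
          Real.log_div (by norm_num) (ne_of_gt (by linarith : (0:ℝ) < 1 - a)),
          show Real.log (1-(1/2:ℝ)) = -Real.log 2 by
            rw [show (1:ℝ)-1/2 = (2:ℝ)⁻¹ by norm_num, Real.log_inv],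
          show Real.log ((1:ℝ)/2) = -Real.log 2 by rw [one_div, Real.log_inv],
          smul_eq_mul]
        ring
      rw [hval] at hmono
      nlinarith [mul_le_mul_of_nonneg_left hmono hC0.le,
        mul_pos (mul_pos hC0 hP1) (show (0:ℝ) < 1-a by linarith)]
    set d0 : ℝ := C*(z0/((1/2-a1)*a2)) with hd0_def
    set d1 : ℝ := C*(z0/((1-a1)*a2)) with hd1_def
    have hd0 : 0 < d0 := mul_pos hC0 hP0
    have hd1 : 0 < d1 := mul_pos hC0 hP1
    -- piece near 0
    have piece1 : IntegrableOn (fun a => w a * Real.exp (C *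
        ∫ τ in (1/2:ℝ)..a, g τ) / (a * (1 - a))) (Ioc 0 (1/2)) := by
      have hdom : IntegrableOn
          (fun x : ℝ => (2*M*Real.exp (d0*(1 - Real.log (1/2)))) * x^(d0-1))
          (Ioc (0:ℝ) (1/2)) := by
        have h := (intervalIntegral.intervalIntegrable_rpow' (a:=(0:ℝ)) (b:=1/2)
          (show (-1:ℝ) < d0-1 by linarith)).const_mul
          (2*M*Real.exp (d0*(1 - Real.log (1/2))))
        rwa [intervalIntegrable_iff_integrableOn_Ioc_of_le (by norm_num)] at h
      apply Integrable.mono' hdom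
      · exact (hFcont.mono (fun x hx => ⟨hx.1, lt_of_le_of_lt hx.2 (by norm_num)⟩)).aestronglyMeasurable
          measurableSet_Ioc
      · refine (ae_restrict_iff' measurableSet_Ioc).mpr (ae_of_all _ fun a ha => ?_)
        obtain ⟨hb0, hbh⟩ := ha
        have h1a : (0:ℝ) < 1 - a := by linarith
        have hEb := Real.exp_le_exp.mpr (hub0 a ⟨hb0, hbh⟩)
        have hexp : Real.exp (d0 * Real.log a + d0*(1 - Real.log (1/2))) =
            a^d0 * Real.exp (d0*(1-Real.log (1/2))) := by
          rw [Real.exp_add]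
          congr 1
          rw [Real.rpow_def_of_pos hb0, mul_comm]
        have hE2 : Real.exp (C * ∫ τ in (1/2:ℝ)..a, g τ) ≤
            a^d0 * Real.exp (d0*(1-Real.log (1/2))) := hEb.trans hexp.le
        rw [Real.norm_eq_abs, abs_div, abs_mul, abs_of_pos (Real.exp_pos _),
          abs_of_pos (mul_pos hb0 h1a), div_le_iff₀ (mul_pos hb0 h1a)]
        have h1 : |w a| * Real.exp (C * ∫ τ in (1/2:ℝ)..a, g τ) ≤
            M * (a^d0 * Real.exp (d0*(1-Real.log (1/2)))) :=
          mul_le_mul (hM a ⟨hb0, by linarith⟩) hE2 (Real.exp_pos _).le hM0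
        have hpow : a^(d0-1) * a = a^d0 := by
          rw [← Real.rpow_add_one (ne_of_gt hb0) (d0-1)]
          norm_num
        have hfin : 2*M*Real.exp (d0*(1 - Real.log (1/2))) * a^(d0-1) * (a*(1-a)) =
            2*M*Real.exp (d0*(1 - Real.log (1/2))) * (a^(d0-1)*a) * (1-a) := by ring
        rw [hfin, hpow]
        nlinarith [h1, hbh,
          mul_nonneg (mul_nonneg hM0 (Real.exp_pos (d0*(1-Real.log (1/2)))).le)
            (Real.rpow_nonneg hb0.le d0)]
    -- piece near 1
    have piece2 : IntegrableOn (fun a => w a * Real.exp (C *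
        ∫ τ in (1/2:ℝ)..a, g τ) / (a * (1 - a))) (Ioo (1/2) 1) := by
      have hdom : IntegrableOn
          (fun x : ℝ => (2*M*Real.exp (d1*(1 - Real.log (1/2)))) * (1-x)^(d1-1))
          (Ioo (1/2:ℝ) 1) := by
        have h0 := (intervalIntegral.intervalIntegrable_rpow' (a:=(0:ℝ)) (b:=1/2)
          (show (-1:ℝ) < d1-1 by linarith)).comp_sub_left 1
        have hbase : IntervalIntegrable (fun x : ℝ => (1-x)^(d1-1)) volume
            (1-(1/2:ℝ)) (1-(0:ℝ)) := h0.symm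
        rw [show (1:ℝ)-(1/2:ℝ) = 1/2 by norm_num, show (1:ℝ)-(0:ℝ) = 1 by norm_num] at hbase
        have h2 := (intervalIntegrable_iff_integrableOn_Ioc_of_le
          (by norm_num : (1/2:ℝ) ≤ 1)).mp
          (hbase.const_mul (2*M*Real.exp (d1*(1 - Real.log (1/2)))))
        exact h2.mono_set Ioo_subset_Ioc_self
      apply Integrable.mono' hdom
      · exact (hFcont.mono (fun x hx => ⟨lt_trans (by norm_num) hx.1, hx.2⟩)).aestronglyMeasurable
          measurableSet_Ioo
      · refine (ae_restrict_iff' measurableSet_Ioo).mpr (ae_of_all _ fun a ha => ?_)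
        obtain ⟨hb0, hbh⟩ := ha
        have ha0 : (0:ℝ) < a := by linarith
        have h1a : (0:ℝ) < 1 - a := by linarith
        have hEb := Real.exp_le_exp.mpr (hub1 a ⟨hb0.le, hbh⟩)
        have hexp : Real.exp (d1 * Real.log (1-a) + d1*(1 - Real.log (1/2))) =
            (1-a)^d1 * Real.exp (d1*(1-Real.log (1/2))) := by
          rw [Real.exp_add]
          congr 1
          rw [Real.rpow_def_of_pos h1a, mul_comm]
        have hE2 : Real.exp (C * ∫ τ in (1/2:ℝ)..a, g τ) ≤
            (1-a)^d1 * Real.exp (d1*(1-Real.log (1/2))) := hEb.trans hexp.le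
        rw [Real.norm_eq_abs, abs_div, abs_mul, abs_of_pos (Real.exp_pos _),
          abs_of_pos (mul_pos ha0 h1a), div_le_iff₀ (mul_pos ha0 h1a)]
        have h1 : |w a| * Real.exp (C * ∫ τ in (1/2:ℝ)..a, g τ) ≤
            M * ((1-a)^d1 * Real.exp (d1*(1-Real.log (1/2)))) :=
          mul_le_mul (hM a ⟨ha0, hbh⟩) hE2 (Real.exp_pos _).le hM0
        have hpow : (1-a)^(d1-1) * (1-a) = (1-a)^d1 := by
          rw [← Real.rpow_add_one (ne_of_gt h1a) (d1-1)]
          norm_num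
        have hfin : 2*M*Real.exp (d1*(1 - Real.log (1/2))) * (1-a)^(d1-1) * (a*(1-a)) =
            2*M*Real.exp (d1*(1 - Real.log (1/2))) * ((1-a)^(d1-1)*(1-a)) * a := by ring
        rw [hfin, hpow]
        nlinarith [h1, hb0,
          mul_nonneg (mul_nonneg hM0 (Real.exp_pos (d1*(1-Real.log (1/2)))).le)
            (Real.rpow_nonneg h1a.le d1)]
    have hUnion : Ioo (0:ℝ) 1 ⊆ Ioc 0 (1/2) ∪ Ioo (1/2) 1 := by
      intro x hx
      obtain ⟨h0, h1⟩ := hx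
      rcases le_or_gt x (1/2) with h | h
      · exact Or.inl ⟨h0, h⟩
      · exact Or.inr ⟨h, h1⟩
    exact (piece1.union piece2).mono_set hUnion
  constructor
  · simp only [hQp]
    apply key (fun a => c0 * ((1/2 - a1)/(a - a1)))
      ?_ (|c0| * ((1/2 - a1)/(-a1)))
    · intro a ha
      obtain ⟨h0, h1⟩ := ha
      have hp1 : (0:ℝ) < 1/2 - a1 := by linarith
      have hp2 : (0:ℝ) < a - a1 := by linarith
      rw [abs_mul, abs_of_pos (div_pos hp1 hp2)]
      gcongr <;> linarith
    · exact continuousOn_const.mul (continuousOn_const.div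
        (continuousOn_id.sub continuousOn_const)
        (fun x hx => by obtain ⟨h0, h1⟩ := hx; exact ne_of_gt (by linarith)))
  · simp only [hQm]
    apply key (fun a => c0 * ((1/2 - a1)/(a2 - a)))
      ?_ (|c0| * ((1/2 - a1)/(a2 - 1)))
    · intro a ha
      obtain ⟨h0, h1⟩ := ha
      have hp1 : (0:ℝ) < 1/2 - a1 := by linarith
      have hp2 : (0:ℝ) < a2 - a := by linarith
      rw [abs_mul, abs_of_pos (div_pos hp1 hp2)]
      gcongr <;> linarith
    · exact continuousOn_const.mul (continuousOn_const.div
        (continuousOn_const.sub continuousOn_id)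
        (fun x hx => by obtain ⟨h0, h1⟩ := hx; exact ne_of_gt (by linarith)))
end

section
/- Suppose v₀(a) satisfies on (0,1) the conditions: a(1-a)(1-2a)·d/da[(1-2a)v₀(a)] = -Z(a)(1-2a)v₀(a) with Z continuous and positive, and the boundary conditions (1-2a)v₀(a) → 0 as a → 0⁺, a → 1/2, and a → 1⁻. Then (1-2a)v₀(a) ≡ 0 on (0,1). -/
open Set Filter Topology

/-! Writing `w = (1 - 2a) v₀`, the equation reads `w' = c w` with
`c = -Z / (a (1 - a) (1 - 2a))`, which is `≤ 0` on `(0, 1/2)` and `≥ 0` on `(1/2, 1)`.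
Hence `(w²)' = 2 c w²` makes `w²` antitone on `(0, 1/2)` and monotone on `(1/2, 1)`, so `w²`
is bounded by its limit `0` at `0⁺`, respectively at `1⁻`. -/

theorem AntitoneOn.le_of_tendsto_nhdsGT {α β : Type*} [LinearOrder α] [TopologicalSpace α]
    [OrderTopology α] [DenselyOrdered α] [Preorder β] [TopologicalSpace β] [OrderClosedTopology β]
    {f : α → β} {a b x : α} {l : β} (hf : AntitoneOn f (Ioo a b))
    (hlim : Tendsto f (𝓝[>] a) (𝓝 l)) (hx : x ∈ Ioo a b) : f x ≤ l :=
  haveI := nhdsGT_neBot_of_exists_gt ⟨x, hx.1⟩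
  ge_of_tendsto hlim <| by
    filter_upwards [Ioo_mem_nhdsGT hx.1] with t ht
    exact hf ⟨ht.1, ht.2.trans hx.2⟩ hx ht.2.le

theorem MonotoneOn.le_of_tendsto_nhdsLT {α β : Type*} [LinearOrder α] [TopologicalSpace α]
    [OrderTopology α] [DenselyOrdered α] [Preorder β] [TopologicalSpace β] [OrderClosedTopology β]
    {f : α → β} {a b x : α} {l : β} (hf : MonotoneOn f (Ioo a b))
    (hlim : Tendsto f (𝓝[<] b) (𝓝 l)) (hx : x ∈ Ioo a b) : f x ≤ l :=
  haveI := nhdsLT_neBot_of_exists_lt ⟨x, hx.2⟩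
  ge_of_tendsto hlim <| by
    filter_upwards [Ioo_mem_nhdsLT hx.2] with t ht
    exact hf hx ⟨hx.1.trans ht.1, ht.2⟩ ht.1.le

section LinearODE

variable {w c : ℝ → ℝ} {D : Set ℝ}

theorem hasDerivAt_sq_of_hasDerivAt_mul {x : ℝ} (hw : HasDerivAt w (c x * w x) x) :
    HasDerivAt (fun y => w y ^ 2) (2 * c x * w x ^ 2) x :=
  (hw.pow 2).congr_deriv (by ring)

theorem antitoneOn_sq_of_hasDerivAt_mul (hD : Convex ℝ D) (hDo : IsOpen D)
    (hw : ∀ x ∈ D, HasDerivAt w (c x * w x) x) (hc : ∀ x ∈ D, c x ≤ 0) :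
    AntitoneOn (fun x => w x ^ 2) D := by
  refine antitoneOn_of_hasDerivWithinAt_nonpos hD (f' := fun x => 2 * c x * w x ^ 2)
    (fun x hx => (hasDerivAt_sq_of_hasDerivAt_mul (hw x hx)).continuousAt.continuousWithinAt)
    (fun x hx => ?_) (fun x hx => ?_) <;> rw [hDo.interior_eq] at hx
  · exact (hasDerivAt_sq_of_hasDerivAt_mul (hw x hx)).hasDerivWithinAt.mono interior_subset
  · exact mul_nonpos_of_nonpos_of_nonneg (mul_nonpos_of_nonneg_of_nonpos zero_le_two (hc x hx))
      (sq_nonneg _)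

theorem monotoneOn_sq_of_hasDerivAt_mul (hD : Convex ℝ D) (hDo : IsOpen D)
    (hw : ∀ x ∈ D, HasDerivAt w (c x * w x) x) (hc : ∀ x ∈ D, 0 ≤ c x) :
    MonotoneOn (fun x => w x ^ 2) D := by
  refine monotoneOn_of_hasDerivWithinAt_nonneg hD (f' := fun x => 2 * c x * w x ^ 2)
    (fun x hx => (hasDerivAt_sq_of_hasDerivAt_mul (hw x hx)).continuousAt.continuousWithinAt)
    (fun x hx => ?_) (fun x hx => ?_) <;> rw [hDo.interior_eq] at hx
  · exact (hasDerivAt_sq_of_hasDerivAt_mul (hw x hx)).hasDerivWithinAt.mono interior_subset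
  · exact mul_nonneg (mul_nonneg zero_le_two (hc x hx)) (sq_nonneg _)

variable {a b x : ℝ}

theorem eq_zero_of_hasDerivAt_mul_of_tendsto_nhdsGT
    (hw : ∀ x ∈ Ioo a b, HasDerivAt w (c x * w x) x) (hc : ∀ x ∈ Ioo a b, c x ≤ 0)
    (hlim : Tendsto w (𝓝[>] a) (𝓝 0)) (hx : x ∈ Ioo a b) : w x = 0 := by
  rw [← sq_nonpos_iff]
  exact (antitoneOn_sq_of_hasDerivAt_mul (convex_Ioo a b) isOpen_Ioo hw hc).le_of_tendsto_nhdsGT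
    (by simpa using hlim.pow 2) hx

theorem eq_zero_of_hasDerivAt_mul_of_tendsto_nhdsLT
    (hw : ∀ x ∈ Ioo a b, HasDerivAt w (c x * w x) x) (hc : ∀ x ∈ Ioo a b, 0 ≤ c x)
    (hlim : Tendsto w (𝓝[<] b) (𝓝 0)) (hx : x ∈ Ioo a b) : w x = 0 := by
  rw [← sq_nonpos_iff]
  exact (monotoneOn_sq_of_hasDerivAt_mul (convex_Ioo a b) isOpen_Ioo hw hc).le_of_tendsto_nhdsLT
    (by simpa using hlim.pow 2) hx

end LinearODE

theorem stmt_15_general (Z v0 : ℝ → ℝ)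
    (hZpos : ∀ a ∈ Ioo (0:ℝ) 1, 0 < Z a)
    (hODE : ∀ a ∈ Ioo (0:ℝ) 1, a ≠ 1/2 →
      HasDerivAt (fun a => (1 - 2*a) * v0 a)
        (-(Z a) * ((1 - 2*a) * v0 a) / (a * (1-a) * (1 - 2*a))) a)
    (hb0 : Tendsto (fun a => (1 - 2*a) * v0 a) (nhdsWithin 0 (Ioi 0)) (nhds 0))
    (hb1 : Tendsto (fun a => (1 - 2*a) * v0 a) (nhdsWithin 1 (Iio 1)) (nhds 0)) :
    ∀ a ∈ Ioo (0:ℝ) 1, (1 - 2*a) * v0 a = 0 := by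
  set w : ℝ → ℝ := fun a => (1 - 2*a) * v0 a
  set c : ℝ → ℝ := fun a => -Z a / (a * (1 - a) * (1 - 2*a))
  have hlin : ∀ a ∈ Ioo (0:ℝ) 1, a ≠ 1/2 → HasDerivAt w (c a * w a) a :=
    fun a ha hne => (hODE a ha hne).congr_deriv (by ring)
  intro a ha
  show w a = 0
  rcases lt_trichotomy a (1/2) with hlt | rfl | hgt
  · have hsub : Ioo (0:ℝ) (1/2) ⊆ Ioo 0 1 := Ioo_subset_Ioo_right (by norm_num)
    refine eq_zero_of_hasDerivAt_mul_of_tendsto_nhdsGT (b := 1/2)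
      (fun x hx => hlin x (hsub hx) hx.2.ne) (fun x hx => ?_) hb0 ⟨ha.1, hlt⟩
    have hden : 0 < x * (1 - x) * (1 - 2*x) := by
      obtain ⟨hx0, hx1⟩ := hx
      exact mul_pos (mul_pos hx0 (by linarith)) (by linarith)
    exact div_nonpos_of_nonpos_of_nonneg (neg_nonpos.mpr (hZpos x (hsub hx)).le) hden.le
  · norm_num [w]
  · have hsub : Ioo (1/2:ℝ) 1 ⊆ Ioo 0 1 := Ioo_subset_Ioo_left (by norm_num)
    refine eq_zero_of_hasDerivAt_mul_of_tendsto_nhdsLT (a := 1/2)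
      (fun x hx => hlin x (hsub hx) hx.1.ne') (fun x hx => ?_) hb1 ⟨hgt, ha.2⟩
    have hden : x * (1 - x) * (1 - 2*x) < 0 := by
      obtain ⟨hx0, hx1⟩ := hx
      exact mul_neg_of_pos_of_neg (mul_pos (by linarith) (by linarith)) (by linarith)
    exact div_nonneg_of_nonpos (neg_nonpos.mpr (hZpos x (hsub hx)).le) hden.le

theorem stmt_15 (Z v0 : ℝ → ℝ)
    (hZc : ContinuousOn Z (Ioo 0 1)) (hZpos : ∀ a ∈ Ioo (0:ℝ) 1, 0 < Z a)
    (hODE : ∀ a ∈ Ioo (0:ℝ) 1, a ≠ 1/2 →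
      HasDerivAt (fun a => (1 - 2*a) * v0 a)
        (-(Z a) * ((1 - 2*a) * v0 a) / (a * (1-a) * (1 - 2*a))) a)
    (hb0 : Tendsto (fun a => (1 - 2*a) * v0 a) (nhdsWithin 0 (Ioi 0)) (nhds 0))
    (hbhalf : Tendsto (fun a => (1 - 2*a) * v0 a)
      (nhdsWithin (1/2) {(1:ℝ)/2}ᶜ) (nhds 0))
    (hb1 : Tendsto (fun a => (1 - 2*a) * v0 a) (nhdsWithin 1 (Iio 1)) (nhds 0)) :
    ∀ a ∈ Ioo (0:ℝ) 1, (1 - 2*a) * v0 a = 0 :=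
  stmt_15_general Z v0 hZpos hODE hb0 hb1
end
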